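/- Let G be a simple graph, k a positive integer, and P a k-plex of G with |P| ≥ 2k - 1. Then for every vertex v ∈ P, P ⊆ {v} ∪ N_G(v) ∪ N_G^2(v), where N_G^2(v) denotes the 2-hop neighbors of v in G. -/

import Mathlib

open scoped Classical

/-- A `k`-plex of a simple graph `G` is a finite vertex set `P` such that every
vertex `v ∈ P` has at least `|P| - k` neighbors inside `P`. -/
def IsKPlex {V : Type*} (G : SimpleGraph V) (k : ℕ) (P : Finset V) : Prop :=
  ∀ v ∈ P, P.card - k ≤ (P.filter (fun u => G.Adj v u)).card

/-- The 2-hop neighbors of `v` in `G`: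
`N_G²(v) = (⋃_{u ∈ N_G(v)} N_G(u)) \ (N_G(v) ∪ {v})`. -/
def twoHop {V : Type*} (G : SimpleGraph V) (v : V) : Set V :=
  (⋃ u ∈ G.neighborSet v, G.neighborSet u) \ (G.neighborSet v ∪ {v})

/-! Two non-adjacent vertices `v ≠ w` of a `k`-plex `P` each have at least `|P| - k` neighbours
in `P`, all inside `P \ {v, w}`. When `|P| ≥ 2k - 1` these counts add up to more than
`|P| - 2`, so the two neighbourhoods meet, and `w` is a 2-hop neighbour of `v`. -/

namespace SimpleGraph

variable {V : Type*} (G : SimpleGraph V)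

theorem mem_twoHop_of_adj_of_adj {v u w : V} (hwv : w ≠ v) (hvw : ¬G.Adj v w)
    (hvu : G.Adj v u) (huw : G.Adj u w) : w ∈ twoHop G v :=
  ⟨Set.mem_biUnion hvu huw, by rintro (h | h) <;> contradiction⟩

theorem filter_adj_subset_erase_erase {P : Finset V} {v w : V} (hvw : ¬G.Adj v w) :
    P.filter (G.Adj v) ⊆ (P.erase v).erase w := by
  intro x hx
  obtain ⟨hxP, hvx⟩ := Finset.mem_filter.mp hx
  exact Finset.mem_erase.mpr ⟨by rintro rfl; exact hvw hvx, Finset.mem_erase.mpr ⟨hvx.ne', hxP⟩⟩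

theorem exists_common_adj_of_card_sub_two_lt {P : Finset V} {v w : V} (hv : v ∈ P) (hw : w ∈ P)
    (hwv : w ≠ v) (hvw : ¬G.Adj v w)
    (hlt : P.card - 2 < (P.filter (G.Adj v)).card + (P.filter (G.Adj w)).card) :
    ∃ u, G.Adj v u ∧ G.Adj u w := by
  have hcard : ((P.erase v).erase w).card = P.card - 2 := by
    rw [Finset.card_erase_of_mem (Finset.mem_erase.mpr ⟨hwv, hw⟩), Finset.card_erase_of_mem hv]
    rfl
  have hwsub : P.filter (G.Adj w) ⊆ (P.erase v).erase w :=
    Finset.erase_right_comm (s := P) ▸ G.filter_adj_subset_erase_erase fun h => hvw h.symm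
  obtain ⟨u, hu⟩ := Finset.inter_nonempty_of_card_lt_card_add_card
    (G.filter_adj_subset_erase_erase hvw) hwsub (hcard ▸ hlt)
  simp only [Finset.mem_inter, Finset.mem_filter] at hu
  exact ⟨u, hu.1.2, hu.2.2.symm⟩

end SimpleGraph

theorem IsKPlex.exists_common_adj {V : Type*} {G : SimpleGraph V} {k : ℕ} {P : Finset V}
    (hP : IsKPlex G k P) (hcard : 2 * k - 1 ≤ P.card) {v w : V} (hv : v ∈ P) (hw : w ∈ P)
    (hwv : w ≠ v) (hvw : ¬G.Adj v w) : ∃ u, G.Adj v u ∧ G.Adj u w := by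
  refine G.exists_common_adj_of_card_sub_two_lt hv hw hwv hvw ?_
  have hnv : P.card - k ≤ (P.filter (G.Adj v)).card := hP v hv
  have hnw : P.card - k ≤ (P.filter (G.Adj w)).card := hP w hw
  have htwo : 1 < P.card := Finset.one_lt_card.mpr ⟨v, hv, w, hw, Ne.symm hwv⟩
  omega

theorem kplex_subset_closed_two_hop_general {V : Type*} (G : SimpleGraph V)
    (k : ℕ) (P : Finset V) (hP : IsKPlex G k P)
    (hcard : 2 * k - 1 ≤ P.card) :
    ∀ v ∈ P, (↑P : Set V) ⊆ {v} ∪ G.neighborSet v ∪ twoHop G v := by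
  intro v hv w hw
  by_cases hwv : w = v
  · exact Or.inl (Or.inl hwv)
  by_cases hvw : G.Adj v w
  · exact Or.inl (Or.inr hvw)
  obtain ⟨u, hvu, huw⟩ := hP.exists_common_adj hcard hv hw hwv hvw
  exact Or.inr (G.mem_twoHop_of_adj_of_adj hwv hvw hvu huw)

/-- If `P` is a `k`-plex with `|P| ≥ 2k - 1`, then for every `v ∈ P` we have
`P ⊆ {v} ∪ N_G(v) ∪ N_G²(v)`. -/
theorem kplex_subset_closed_two_hop {V : Type*} (G : SimpleGraph V)
    (k : ℕ) (hk : 0 < k) (P : Finset V) (hP : IsKPlex G k P)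
    (hcard : 2 * k - 1 ≤ P.card) :
    ∀ v ∈ P, (↑P : Set V) ⊆ {v} ∪ G.neighborSet v ∪ twoHop G v :=
  kplex_subset_closed_two_hop_general G k P hP hcard
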